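/- arXiv:1602.03965 — 8 statements merged into one kernel-verified Lean document; each statement's English description precedes it below -/
import Mathlib

section
/- Let u be an invertible complex n×n matrix such that the map K defined by K(x) = (x + u*x*u⁻¹)/2 satisfies K(x²) = K(x)² for all complex n×n matrices x. Then K is the identity map, i.e., u*x*u⁻¹ = x for all x. -/
/-!
Write `D x = x - u x u⁻¹`. Since `x ↦ u x u⁻¹` preserves squares, the hypothesis says exactly that
`(D x)² = 0` for every `x`. Polarizing gives `D x D y + D y D x = 0`, hence `tr (D x D y) = 0`.
For the trace form, `D` is adjoint to `a ↦ a - u⁻¹ a u`, so `D x` commutes with `u`, which amounts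
to `⁅u, ⁅u, x⁆⁆ = 0`. Tested against matrix units this forces `u` to be diagonal with
`(u i i - u j j)² = 0`, so `u` is scalar.
-/

theorem sq_sub_eq_zero_of_mean_sq_eq_sq_mean {K A : Type*} [Field K] [NeZero (2 : K)] [Ring A]
    [Algebra K A] {a b : A} (h : (1 / 2 : K) • (a ^ 2 + b ^ 2) = ((1 / 2 : K) • (a + b)) ^ 2) :
    (a - b) ^ 2 = 0 := by
  have h2 : (2 : K) • (a ^ 2 + b ^ 2) = (a + b) ^ 2 := by
    have h4 := congrArg ((4 : K) • ·) h
    have c1 : (4 : K) * (1 / 2) = 2 := by field_simp; norm_num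
    have c2 : (4 : K) * (1 / 2) ^ 2 = 1 := by field_simp; norm_num
    simpa only [smul_pow, smul_smul, c1, c2, one_smul] using h4
  calc (a - b) ^ 2 = (2 : K) • (a ^ 2 + b ^ 2) - (a + b) ^ 2 := by rw [two_smul]; noncomm_ring
    _ = 0 := sub_eq_zero.2 h2

theorem Units.lie_lie_eq_zero_of_commute_sub_conj {A : Type*} [Ring A] (U : Aˣ) (x : A)
    (h : Commute (x - U * x * ↑U⁻¹) U) : ⁅(U : A), ⁅(U : A), x⁆⁆ = 0 := by
  have hlie : ⁅(U : A), x⁆ = -((x - U * x * ↑U⁻¹) * U) := by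
    simp [Ring.lie_def, sub_mul, mul_assoc]
  calc ⁅(U : A), ⁅(U : A), x⁆⁆ = -((U * (x - U * x * ↑U⁻¹) - (x - U * x * ↑U⁻¹) * U) * U) := by
        rw [hlie, Ring.lie_def]; noncomm_ring
    _ = 0 := by rw [h.eq, sub_self, zero_mul, neg_zero]

namespace Matrix

variable {n : Type*} [Fintype n] [DecidableEq n]

theorem commute_of_forall_trace_mul_sub_conj_eq_zero {R : Type*} [CommRing R] {U : (Matrix n n R)ˣ}
    {a : Matrix n n R}
    (h : ∀ y, (a * (y - (U : Matrix n n R) * y * (↑U⁻¹ : Matrix n n R))).trace = 0) :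
    Commute a (U : Matrix n n R) := by
  have hconj : (↑U⁻¹ : Matrix n n R) * a * U = a := by
    refine ext_iff_trace_mul_right.2 fun y => ?_
    have hy := h y
    rw [mul_sub, trace_sub, sub_eq_zero] at hy
    rw [hy, ← mul_assoc, ← mul_assoc, trace_mul_comm _ (↑U⁻¹ : Matrix n n R)]
    simp only [mul_assoc]
  calc a * U = U * (↑U⁻¹ * a * U) := by simp [mul_assoc]
    _ = U * a := by rw [hconj]

theorem lie_diagonal_apply {R : Type*} [CommRing R] (d : n → R) (x : Matrix n n R) (i j : n) :
    ⁅diagonal d, x⁆ i j = (d i - d j) * x i j := by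
  simp only [Ring.lie_def, sub_apply, diagonal_mul, mul_diagonal]; ring

theorem isDiag_of_lie_lie_eq_zero {R : Type*} [CommRing R] [NoZeroDivisors R] [NeZero (2 : R)]
    {u : Matrix n n R} (h : ∀ x : Matrix n n R, ⁅u, ⁅u, x⁆⁆ = 0) : u.IsDiag := by
  intro i k hik
  have := congrFun (congrFun (h (single k i 1)) i) k
  simp only [Ring.lie_def, mul_sub, sub_mul, sub_apply, mul_apply, hik, Ne.symm hik, and_false,
    not_false_eq_true, single_apply_of_ne, mul_zero, Finset.sum_const_zero, single_apply, ite_and,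
    ite_mul, one_mul, zero_mul, Finset.sum_ite_irrel, Finset.sum_ite_eq, Finset.mem_univ, ↓reduceIte,
    mul_ite, zero_sub, mul_one, false_and, sub_zero, zero_apply] at this
  have h2 : (2 : R) * (u i k * u i k) = 0 := by linear_combination -this
  exact mul_self_eq_zero.1 ((mul_eq_zero.1 h2).resolve_left two_ne_zero)

theorem lie_eq_zero_of_lie_lie_eq_zero {R : Type*} [CommRing R] [NoZeroDivisors R] [NeZero (2 : R)]
    {u : Matrix n n R} (h : ∀ x : Matrix n n R, ⁅u, ⁅u, x⁆⁆ = 0) (x : Matrix n n R) :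
    ⁅u, x⁆ = 0 := by
  have hu := (isDiag_of_lie_lie_eq_zero h).diagonal_diag
  rw [← hu] at h ⊢
  have hd : ∀ i j, u i i = u j j := fun i j => by
    have := congrFun (congrFun (h (of fun _ _ => 1)) i) j
    simpa [lie_diagonal_apply, sub_eq_zero] using this
  ext i j
  simp [lie_diagonal_apply, hd i j]

theorem units_conj_eq_self_of_average_conj_sq {K : Type*} [Field K] [NeZero (2 : K)]
    (U : (Matrix n n K)ˣ)
    (hK : ∀ x : Matrix n n K, (1 / 2 : K) • (x ^ 2 + U * x ^ 2 * (↑U⁻¹ : Matrix n n K)) =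
      ((1 / 2 : K) • (x + U * x * (↑U⁻¹ : Matrix n n K))) ^ 2)
    (x : Matrix n n K) : (U : Matrix n n K) * x * (↑U⁻¹ : Matrix n n K) = x := by
  let D (x : Matrix n n K) : Matrix n n K := x - U * x * (↑U⁻¹ : Matrix n n K)
  have hsq (x) : D x * D x = 0 := by
    rw [← sq]
    exact sq_sub_eq_zero_of_mean_sq_eq_sq_mean (by rw [Units.conj_pow]; exact hK x)
  have hanti (x y) : D x * D y + D y * D x = 0 := by
    calc D x * D y + D y * D x = D (x + y) * D (x + y) - D x * D x - D y * D y := by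
          simp only [D]; noncomm_ring
      _ = 0 := by rw [hsq, hsq, hsq, sub_zero, sub_zero]
  have htrace (x y) : (D x * D y).trace = 0 := by
    have h2 := congrArg trace (hanti x y)
    rw [trace_add, trace_mul_comm (D y), trace_zero, ← two_mul, mul_eq_zero] at h2
    exact h2.resolve_left two_ne_zero
  have hlie : ⁅(U : Matrix n n K), x⁆ = 0 :=
    lie_eq_zero_of_lie_lie_eq_zero (fun x => U.lie_lie_eq_zero_of_commute_sub_conj x
      (commute_of_forall_trace_mul_sub_conj_eq_zero (htrace x))) x
  rw [sub_eq_zero.1 hlie, Units.mul_inv_cancel_right]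

end Matrix

theorem stmt_0 (n : ℕ) (u : Matrix (Fin n) (Fin n) ℂ) (hu : IsUnit u)
    (hK : ∀ x : Matrix (Fin n) (Fin n) ℂ,
      ((1 : ℂ)/2) • (x ^ 2 + u * x ^ 2 * u⁻¹) =
        (((1 : ℂ)/2) • (x + u * x * u⁻¹)) ^ 2) :
    ∀ x : Matrix (Fin n) (Fin n) ℂ, u * x * u⁻¹ = x := by
  obtain ⟨U, rfl⟩ := hu
  simp only [← Matrix.coe_units_inv] at hK ⊢
  exact Matrix.units_conj_eq_self_of_average_conj_sq U hK
end

section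
/- Let u be an invertible complex n×n matrix such that (x - u*x*u⁻¹)² = 0 for every complex n×n matrix x. Then u commutes with every complex n×n matrix, i.e., u is a scalar multiple of the identity. -/
theorem stmt_1 (n : ℕ) (u : Matrix (Fin n) (Fin n) ℂ) (hu : IsUnit u)
    (h : ∀ x : Matrix (Fin n) (Fin n) ℂ, (x - u * x * u⁻¹) ^ 2 = 0) :
    ∀ x : Matrix (Fin n) (Fin n) ℂ, u * x = x * u := by
  have hinv : u * u⁻¹ = 1 := Matrix.mul_nonsing_inv u ((Matrix.isUnit_iff_isUnit_det u).mp hu)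
  have h' : ∀ y : Matrix (Fin n) (Fin n) ℂ, (y * u - u * y) ^ 2 = 0 := by
    intro y
    have hy := h (y * u)
    rwa [show u * (y * u) * u⁻¹ = u * y by
      rw [Matrix.mul_assoc u (y * u) u⁻¹, Matrix.mul_assoc y u u⁻¹, hinv, Matrix.mul_one]] at hy
  have hoff : ∀ i j : Fin n, i ≠ j → u j i = 0 := by
    intro i j hij
    have key := congrFun (congrFun (h' (Matrix.single i j 1)) i) i
    simpa [pow_two, Matrix.mul_apply, Matrix.sub_apply, Matrix.single,
      Matrix.of_apply, ite_and, ite_mul, mul_ite, Finset.sum_ite_eq, Finset.sum_ite_eq',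
      sub_mul, mul_sub, Finset.sum_sub_distrib, hij, hij.symm] using key
  have hdiag : ∀ i j : Fin n, u i i = u j j := by
    intro i j
    rcases eq_or_ne i j with rfl | hij
    · rfl
    have key := congrFun (congrFun
      (h' (Matrix.single i j 1 + Matrix.single j i 1)) i) i
    simp [pow_two, Matrix.mul_apply, Matrix.sub_apply, Matrix.add_apply, Matrix.single,
      Matrix.of_apply, ite_and, ite_mul, mul_ite, Finset.sum_ite_eq, Finset.sum_ite_eq',
      sub_mul, mul_sub, add_mul, mul_add, Finset.sum_sub_distrib, Finset.sum_add_distrib,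
      hij, hij.symm, hoff i j hij, hoff j i hij.symm] at key
    have hs : (∑ x : Fin n, u j x * u x j) = u j j * u j j :=
      Finset.sum_eq_single_of_mem j (Finset.mem_univ j)
        (fun b _ hb => by rw [hoff b j hb, zero_mul])
    rw [hs] at key
    have h2 : (u i i - u j j) ^ 2 = 0 := by linear_combination -key
    exact sub_eq_zero.mp (pow_eq_zero_iff two_ne_zero |>.mp h2)
  intro x
  ext i j
  rw [Matrix.mul_apply, Matrix.mul_apply,
    Finset.sum_eq_single_of_mem i (Finset.mem_univ i)
      (fun k _ hk => by rw [hoff k i hk, zero_mul]),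
    Finset.sum_eq_single_of_mem j (Finset.mem_univ j)
      (fun k _ hk => by rw [hoff j k hk.symm, mul_zero]),
    hdiag i j]
  ring
end

section
/- If u is a complex n×n matrix such that the commutator x*u - u*x is nilpotent (equivalently has spectral radius zero) for every complex n×n matrix x, then u commutes with every complex n×n matrix. -/
theorem stmt_2 (n : ℕ) (u : Matrix (Fin n) (Fin n) ℂ)
    (h : ∀ x : Matrix (Fin n) (Fin n) ℂ, IsNilpotent (x * u - u * x)) :
    ∀ x : Matrix (Fin n) (Fin n) ℂ, u * x = x * u := by
  have key : ∀ x : Matrix (Fin n) (Fin n) ℂ,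
      Matrix.trace ((x * u - u * x) * (x * u - u * x)) = 0 := by
    intro x
    obtain ⟨k, hk⟩ := h x
    have h2 : IsNilpotent ((x * u - u * x) * (x * u - u * x)) :=
      ⟨k, by rw [← pow_two, ← pow_mul, mul_comm 2 k, pow_mul, hk]; simp⟩
    exact (Matrix.isNilpotent_trace_of_isNilpotent h2).eq_zero
  have hoff : ∀ i j : Fin n, i ≠ j → u j i = 0 := by
    intro i j hij
    have := key (Matrix.single i j 1)
    simp [Matrix.trace, Matrix.mul_apply, Matrix.sub_apply, Matrix.single,
      Matrix.diag, Finset.sum_sub_distrib, Finset.mul_sum, Finset.sum_ite_eq,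
      Finset.sum_ite_eq', hij, hij.symm, ite_and, sub_mul, mul_sub] at this
    exact this
  have s1 : ∀ a b : Fin n, ∑ x : Fin n, u x a * u b x = u a a * u b a := by
    intro a b
    rw [Finset.sum_eq_single a]
    · intro c _ hc
      rw [hoff a c hc.symm, zero_mul]
    · simp
  have s2 : ∀ a b : Fin n, ∑ x : Fin n, u a x * u x b = u a a * u a b := by
    intro a b
    rw [Finset.sum_eq_single a]
    · intro c _ hc
      rw [hoff c a hc, zero_mul]
    · simp
  have hdiag : ∀ i j : Fin n, u i i = u j j := by
    intro i j
    rcases eq_or_ne i j with rfl | hij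
    · rfl
    have := key (Matrix.single i j 1 + Matrix.single j i 1)
    simp [Matrix.trace, Matrix.mul_apply, Matrix.sub_apply, Matrix.add_apply,
      Matrix.single, Matrix.diag, Finset.sum_sub_distrib, Finset.mul_sum,
      Finset.sum_ite_eq, Finset.sum_ite_eq', hij, hij.symm, ite_and, sub_mul, mul_sub,
      add_mul, mul_add, Finset.sum_add_distrib, hoff i j hij, hoff j i hij.symm,
      s1, s2] at this
    have h2 : (u i i - u j j) ^ 2 = 0 := by linear_combination -this/2
    exact sub_eq_zero.mp (pow_eq_zero_iff (n := 2) (by norm_num) |>.mp h2)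
  intro x
  ext k l
  rw [Matrix.mul_apply, Matrix.mul_apply]
  rw [Finset.sum_eq_single k, Finset.sum_eq_single l]
  · rw [hdiag k l]; ring
  · intro c _ hc
    rw [hoff l c hc.symm, mul_zero]
  · simp
  · intro c _ hc
    rw [hoff c k hc, zero_mul]
  · simp
end

section
/- Let T : M_n(ℂ) → M_n(ℂ) be an ℝ-linear bijective map preserving the spectral radius: ρ(T(x)) = ρ(x) for all x. Then T maps scalar matrices to scalar matrices; in particular T(I) = μI for some complex number μ with |μ| = 1. -/
/-!
If `a = T (λ • 1)` were not scalar, some square-zero `N` would have `tr (a N) ≠ 0`. Since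
`tr ((a + t N)²) = tr (a²) + 2 t tr (a N)` and `|tr (y²)| ≤ n ρ(y)²`, suitable multiples `m = t N`
make `ρ(a + m)` arbitrarily large. But `m = T x` by surjectivity, with `ρ(x) = ρ(m) = 0`, so
`ρ(a + m) = ρ(λ • 1 + x) ≤ |λ|`. Finally `T 1 = μ • 1` gives `|μ| = ρ(T 1) = ρ(1) = 1`.
-/

noncomputable def specRad (n : ℕ) (x : Matrix (Fin n) (Fin n) ℂ) : ℝ :=
  sSup ((fun z : ℂ => ‖z‖) '' spectrum ℂ x)

open Matrix

namespace Matrix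

variable {R ι : Type*} [CommRing R] [Fintype ι] [DecidableEq ι]

theorem exists_mul_self_eq_zero_trace_mul_ne_zero {a : Matrix ι ι R} (ha : ∀ c : R, a ≠ c • 1) :
    ∃ N : Matrix ι ι R, N * N = 0 ∧ (a * N).trace ≠ 0 := by
  by_contra! h
  have hoff : ∀ i j, i ≠ j → a i j = 0 := fun i j hij => by
    simpa [trace_mul_single] using h (single j i 1) (by simp [hij])
  have hdiag : ∀ i j, a i i = a j j := by
    intro i j
    rcases eq_or_ne i j with rfl | hij
    · rfl
    -- `N` is the rank-one matrix `(eᵢ - eⱼ)(eᵢ + eⱼ)ᵀ`, whose square vanishes.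
    have := h (single i i 1 + single i j 1 - single j i 1 - single j j 1) (by
      simp [add_mul, mul_add, sub_mul, mul_sub, hij, hij.symm])
    simpa [mul_add, mul_sub, trace_mul_single, hoff i j hij, hoff j i hij.symm, sub_eq_zero]
      using this
  cases isEmpty_or_nonempty ι
  · exact ha 0 (Subsingleton.elim _ _)
  obtain ⟨i⟩ := ‹Nonempty ι›
  refine ha (a i i) (ext fun k l => ?_)
  rcases eq_or_ne k l with rfl | hkl
  · simp [hdiag i k]
  · simp [hoff k l hkl, hkl]

end Matrix

section specRad

variable {n : ℕ}

theorem norm_le_specRad {x : Matrix (Fin n) (Fin n) ℂ} {μ : ℂ} (h : μ ∈ spectrum ℂ x) :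
    ‖μ‖ ≤ specRad n x :=
  le_csSup (x.finite_spectrum.image _).bddAbove ⟨μ, h, rfl⟩

theorem specRad_le {x : Matrix (Fin n) (Fin n) ℂ} {r : ℝ} (hr : 0 ≤ r)
    (h : ∀ μ ∈ spectrum ℂ x, ‖μ‖ ≤ r) : specRad n x ≤ r :=
  Real.sSup_le (by rintro _ ⟨μ, hμ, rfl⟩; exact h μ hμ) hr

theorem specRad_nonneg (x : Matrix (Fin n) (Fin n) ℂ) : 0 ≤ specRad n x :=
  Real.sSup_nonneg (by rintro _ ⟨μ, _, rfl⟩; exact norm_nonneg μ)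

theorem specRad_smul_one [NeZero n] (μ : ℂ) :
    specRad n (μ • (1 : Matrix (Fin n) (Fin n) ℂ)) = ‖μ‖ := by
  rw [specRad, ← Algebra.algebraMap_eq_smul_one, spectrum.scalar_eq, Set.image_singleton,
    csSup_singleton]

theorem specRad_one [NeZero n] : specRad n 1 = 1 := by
  simpa using specRad_smul_one (n := n) 1

theorem specRad_smul_one_add_le (c : ℂ) (x : Matrix (Fin n) (Fin n) ℂ) :
    specRad n (c • 1 + x) ≤ ‖c‖ + specRad n x := by
  refine specRad_le (by positivity [specRad_nonneg x]) fun μ hμ => ?_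
  rw [← Algebra.algebraMap_eq_smul_one, ← spectrum.singleton_add_eq] at hμ
  obtain ⟨c, rfl, ν, hν, rfl⟩ := hμ
  exact (norm_add_le c ν).trans (by gcongr; exact norm_le_specRad hν)

theorem specRad_eq_zero_of_mul_self_eq_zero {x : Matrix (Fin n) (Fin n) ℂ} (h : x * x = 0) :
    specRad n x = 0 := by
  refine le_antisymm (specRad_le le_rfl fun μ hμ => ?_) (specRad_nonneg x)
  rcases subsingleton_or_nontrivial (Matrix (Fin n) (Fin n) ℂ) with _ | _
  · simp [spectrum.of_subsingleton] at hμ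
  have : μ ^ 2 ∈ spectrum ℂ (x ^ 2) := spectrum.pow_image_subset x 2 ⟨μ, hμ, rfl⟩
  rw [sq x, h, spectrum.zero_eq, Set.mem_singleton_iff, sq_eq_zero_iff] at this
  simp [this]

theorem specRad_mul_self_le (y : Matrix (Fin n) (Fin n) ℂ) :
    specRad n (y * y) ≤ specRad n y ^ 2 := by
  refine specRad_le (by positivity) fun μ hμ => ?_
  rw [← sq, spectrum.map_pow_of_pos y two_pos] at hμ
  obtain ⟨ν, hν, rfl⟩ := hμ
  rw [norm_pow]
  gcongr
  exact norm_le_specRad hν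

theorem norm_trace_le_mul_specRad (y : Matrix (Fin n) (Fin n) ℂ) :
    ‖y.trace‖ ≤ n * specRad n y := by
  have hroots : ∀ μ ∈ y.charpoly.roots.map (‖·‖), μ ≤ specRad n y := by
    simp only [Multiset.mem_map, forall_exists_index, and_imp]
    rintro _ μ hμ rfl
    exact norm_le_specRad <|
      mem_spectrum_iff_isRoot_charpoly.mpr (Polynomial.isRoot_of_mem_roots hμ)
  have hcard : (Multiset.card y.charpoly.roots : ℝ) ≤ n := by
    exact_mod_cast (y.charpoly.card_roots').trans (by simp)
  calc ‖y.trace‖ = ‖y.charpoly.roots.sum‖ := by rw [trace_eq_sum_roots_charpoly]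
    _ ≤ (y.charpoly.roots.map (‖·‖)).sum := norm_multiset_sum_le _
    _ ≤ Multiset.card y.charpoly.roots * specRad n y := by
      simpa using Multiset.sum_le_card_nsmul _ _ hroots
    _ ≤ n * specRad n y := by gcongr; exact specRad_nonneg y

end specRad

theorem exists_mul_self_eq_zero_le_specRad_add {n : ℕ} {a : Matrix (Fin n) (Fin n) ℂ}
    (ha : ∀ c : ℂ, a ≠ c • 1) (r : ℝ) :
    ∃ m : Matrix (Fin n) (Fin n) ℂ, m * m = 0 ∧ r ≤ specRad n (a + m) := by
  obtain ⟨N, hN, htr⟩ := exists_mul_self_eq_zero_trace_mul_ne_zero ha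
  have hn : (0 : ℝ) < n := by
    rcases Nat.eq_zero_or_pos n with rfl | hn
    · exact absurd (by simp [trace]) htr
    · exact_mod_cast hn
  set t : ℂ := ((n * r ^ 2 : ℝ) - (a * a).trace) / (2 * (a * N).trace)
  have hm : (t • N) * (t • N) = 0 := by rw [smul_mul_smul_comm, hN, smul_zero]
  have htrace : ((a + t • N) * (a + t • N)).trace = (n * r ^ 2 : ℝ) := by
    rw [add_mul, mul_add, mul_add, hm, Matrix.smul_mul, Matrix.mul_smul]
    simp only [trace_add, trace_smul, trace_zero, smul_eq_mul, trace_mul_comm N a]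
    linear_combination div_mul_cancel₀ (((n * r ^ 2 : ℝ) : ℂ) - (a * a).trace)
      (mul_ne_zero two_ne_zero htr)
  refine ⟨t • N, hm, ?_⟩
  have hsq : n * r ^ 2 ≤ n * specRad n (a + t • N) ^ 2 := calc
    n * r ^ 2 = ‖((a + t • N) * (a + t • N)).trace‖ := by
      rw [htrace, Complex.norm_real, Real.norm_of_nonneg (by positivity)]
    _ ≤ n * specRad n ((a + t • N) * (a + t • N)) := norm_trace_le_mul_specRad _
    _ ≤ n * specRad n (a + t • N) ^ 2 := by gcongr; exact specRad_mul_self_le _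
  exact le_of_sq_le_sq (le_of_mul_le_mul_left hsq hn) (specRad_nonneg _)

theorem stmt_6 (n : ℕ) (T : Matrix (Fin n) (Fin n) ℂ → Matrix (Fin n) (Fin n) ℂ)
    (hT : IsLinearMap ℝ T) (hbij : Function.Bijective T)
    (hρ : ∀ x, specRad n (T x) = specRad n x) :
    (∀ lam : ℂ, ∃ mu : ℂ, T (lam • (1 : Matrix (Fin n) (Fin n) ℂ)) = mu • 1) ∧
      ∃ mu : ℂ, ‖mu‖ = 1 ∧ T 1 = mu • (1 : Matrix (Fin n) (Fin n) ℂ) := by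
  rcases Nat.eq_zero_or_pos n with rfl | hn
  · exact ⟨fun _ => ⟨1, Subsingleton.elim _ _⟩, 1, norm_one, Subsingleton.elim _ _⟩
  have : NeZero n := ⟨hn.ne'⟩
  have hscalar : ∀ lam : ℂ, ∃ mu : ℂ, T (lam • 1) = mu • 1 := by
    intro lam
    by_contra! h
    obtain ⟨m, hm, hlarge⟩ := exists_mul_self_eq_zero_le_specRad_add h (‖lam‖ + 1)
    obtain ⟨x, rfl⟩ := hbij.2 m
    have hx : specRad n x = 0 := by rw [← hρ, specRad_eq_zero_of_mul_self_eq_zero hm]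
    have hbound := specRad_smul_one_add_le lam x
    rw [← hρ, hT.map_add] at hbound
    linarith
  obtain ⟨mu, hmu⟩ := hscalar 1
  rw [one_smul] at hmu
  refine ⟨hscalar, mu, ?_, hmu⟩
  simpa [hmu, specRad_smul_one, specRad_one] using hρ 1
end

section
/- Let T : M_n(ℂ) → M_n(ℂ) be ℝ-linear with ρ(T(x)) = ρ(x) for all x. Then T is injective. -/
open Matrix Polynomial

theorem IsNilpotent.spectrum_subset_zero {K A : Type*} [Field K] [Ring A] [Algebra K A] {a : A}
    (ha : IsNilpotent a) : spectrum K a ⊆ {0} := by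
  nontriviality A
  obtain ⟨k, hk⟩ := ha
  intro μ hμ
  have hμk : μ ^ k ∈ spectrum K (0 : A) := hk ▸ spectrum.pow_mem_pow a k hμ
  rw [spectrum.zero_eq, Set.mem_singleton_iff] at hμk
  exact IsReduced.eq_zero μ ⟨k, hμk⟩

namespace Matrix

variable {ι K : Type*} [Fintype ι] [DecidableEq ι] [Field K]

theorem charpoly_eq_X_pow_of_spectrum_subset_zero [IsAlgClosed K] {M : Matrix ι ι K}
    (h : spectrum K M ⊆ {0}) : M.charpoly = X ^ Fintype.card ι := by
  have hroots : M.charpoly.roots = Multiset.replicate (Fintype.card ι) 0 := by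
    refine Multiset.eq_replicate.mpr ⟨?_, fun μ hμ => h ?_⟩
    · rw [← M.charpoly_natDegree_eq_dim]
      exact (IsAlgClosed.splits _).natDegree_eq_card_roots.symm
    · exact mem_spectrum_iff_isRoot_charpoly.mpr (isRoot_of_mem_roots hμ)
  rw [(IsAlgClosed.splits _).eq_prod_roots_of_monic M.charpoly_monic, hroots]
  simp

theorem isNilpotent_of_spectrum_subset_zero [IsAlgClosed K] {M : Matrix ι ι K}
    (h : spectrum K M ⊆ {0}) : IsNilpotent M :=
  ⟨Fintype.card ι, by
    simpa [charpoly_eq_X_pow_of_spectrum_subset_zero h] using M.aeval_self_charpoly⟩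

theorem trace_mul_self_eq_zero_of_isNilpotent {y : Matrix ι ι K} (hy : IsNilpotent y) :
    trace (y * y) = 0 :=
  (isNilpotent_trace_of_isNilpotent ((Commute.refl y).isNilpotent_mul_left hy)).eq_zero

theorem trace_mul_eq_zero_of_isNilpotent_add [NeZero (2 : K)] {x N : Matrix ι ι K}
    (hx : IsNilpotent x) (hN : N * N = 0) (hxN : IsNilpotent (x + N)) : trace (x * N) = 0 := by
  have hexpand : (x + N) * (x + N) = x * x + x * N + N * x + N * N := by noncomm_ring
  have h := trace_mul_self_eq_zero_of_isNilpotent hxN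
  rw [hexpand, trace_add, trace_add, trace_add, trace_mul_self_eq_zero_of_isNilpotent hx, hN,
    trace_mul_comm N x, trace_zero] at h
  have h2 : (2 : K) * trace (x * N) = 0 := by linear_combination h
  exact (mul_eq_zero.mp h2).resolve_left two_ne_zero

theorem eq_zero_of_isNilpotent_diagonal {d : ι → K} (h : IsNilpotent (diagonal d)) : d = 0 := by
  obtain ⟨k, hk⟩ := h
  rw [diagonal_pow, diagonal_eq_zero] at hk
  exact IsReduced.eq_zero d ⟨k, hk⟩

theorem eq_zero_of_forall_isNilpotent_add [NeZero (2 : K)] {x : Matrix ι ι K}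
    (h : ∀ N, IsNilpotent N → IsNilpotent (x + N)) : x = 0 := by
  have hx : IsNilpotent x := by simpa using h 0 IsNilpotent.zero
  have hoff : ∀ i j, i ≠ j → x i j = 0 := by
    intro i j hij
    have hN : single j i (1 : K) * single j i 1 = 0 := single_mul_single_of_ne _ _ _ _ hij _
    simpa [trace_mul_single] using
      trace_mul_eq_zero_of_isNilpotent_add hx hN (h _ ⟨2, by rw [sq, hN]⟩)
  have hdiag : x = diagonal (diag x) := by
    ext i j
    by_cases hij : i = j
    · subst hij; simp
    · simp [hoff i j hij, hij]
  have hd : diag x = 0 := eq_zero_of_isNilpotent_diagonal (hdiag ▸ hx)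
  rw [hdiag, hd]
  exact diagonal_zero

end Matrix

theorem specRad_eq_zero_iff_isNilpotent {n : ℕ} {x : Matrix (Fin n) (Fin n) ℂ} :
    specRad n x = 0 ↔ IsNilpotent x := by
  refine ⟨fun h => isNilpotent_of_spectrum_subset_zero fun μ hμ => ?_, fun h => ?_⟩
  · have hbdd : BddAbove ((fun z : ℂ => ‖z‖) '' spectrum ℂ x) :=
      ((finite_spectrum x).image _).bddAbove
    have hμ0 : ‖μ‖ ≤ 0 := h ▸ le_csSup hbdd ⟨μ, hμ, rfl⟩
    simpa using hμ0
  · refine le_antisymm (Real.sSup_nonpos ?_) (Real.sSup_nonneg ?_)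
    · rintro _ ⟨μ, hμ, rfl⟩
      simpa using h.spectrum_subset_zero hμ
    · rintro _ ⟨μ, -, rfl⟩
      exact norm_nonneg μ

theorem stmt_7 (n : ℕ) (T : Matrix (Fin n) (Fin n) ℂ → Matrix (Fin n) (Fin n) ℂ)
    (hT : IsLinearMap ℝ T)
    (hρ : ∀ x, specRad n (T x) = specRad n x) :
    Function.Injective T := by
  intro a b hab
  have hρ_add : ∀ z, specRad n (a - b + z) = specRad n z := fun z => by
    rw [← hρ, hT.map_add, hT.map_sub, hab, sub_self, zero_add, hρ]
  refine sub_eq_zero.mp (eq_zero_of_forall_isNilpotent_add fun N hN => ?_)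
  rw [← specRad_eq_zero_iff_isNilpotent, hρ_add, specRad_eq_zero_iff_isNilpotent]
  exact hN
end

section
/- Let T : M_n(ℂ) → M_n(ℂ) be a bijective ℝ-linear map with ρ(T(x)) = ρ(x) for all x, and suppose T(λI) = λI for all λ ∈ ℂ. Then T preserves the peripheral spectrum: for every x, the set of eigenvalues of x of maximal modulus equals the set of eigenvalues of T(x) of maximal modulus. -/
lemma eq_of_norm_le_of_norm_add_eq_two_mul {E : Type*} [NormedAddCommGroup E] [NormedSpace ℝ E]
    [StrictConvexSpace ℝ E] {u v : E} (hle : ‖u‖ ≤ ‖v‖) (hadd : ‖u + v‖ = 2 * ‖v‖) : u = v := by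
  have hnorm : ‖u‖ = ‖v‖ := by linarith [norm_add_le u v]
  have hray : SameRay ℝ u v := sameRay_iff_norm_add.mpr (by rw [hadd, hnorm]; ring)
  exact hray.eq_of_norm_eq hnorm

def peripheralSpectrum (n : ℕ) (x : Matrix (Fin n) (Fin n) ℂ) : Set ℂ :=
  {lam ∈ spectrum ℂ x | ‖lam‖ = specRad n x}

namespace specRad

variable {n : ℕ}

lemma norm_le {x : Matrix (Fin n) (Fin n) ℂ} {μ : ℂ} (h : μ ∈ spectrum ℂ x) :
    ‖μ‖ ≤ specRad n x :=
  le_csSup ((Matrix.finite_spectrum x).image _).bddAbove ⟨μ, h, rfl⟩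

lemma exists_mem_spectrum_norm_eq [Nonempty (Fin n)] (x : Matrix (Fin n) (Fin n) ℂ) :
    ∃ μ ∈ spectrum ℂ x, ‖μ‖ = specRad n x :=
  ((spectrum.nonempty_of_isAlgClosed_of_finiteDimensional ℂ x).image _).csSup_mem
    ((Matrix.finite_spectrum x).image _)

lemma spectrum_add_smul_one (x : Matrix (Fin n) (Fin n) ℂ) (lam : ℂ) :
    spectrum ℂ (x + lam • 1) = (· + lam) '' spectrum ℂ x := by
  rw [← Algebra.algebraMap_eq_smul_one, ← spectrum.add_singleton_eq, Set.add_singleton]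

lemma add_smul_one_le [Nonempty (Fin n)] {x : Matrix (Fin n) (Fin n) ℂ} {lam : ℂ}
    (hlam : ‖lam‖ = specRad n x) : specRad n (x + lam • 1) ≤ 2 * ‖lam‖ := by
  obtain ⟨μ, hμ, hμnorm⟩ := exists_mem_spectrum_norm_eq (x + lam • 1)
  rw [spectrum_add_smul_one] at hμ
  obtain ⟨ν, hν, rfl⟩ := hμ
  rw [← hμnorm]
  linarith [norm_add_le ν lam, norm_le hν]

lemma mem_spectrum_iff_add_smul_one_eq [Nonempty (Fin n)] {x : Matrix (Fin n) (Fin n) ℂ}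
    {lam : ℂ} (hlam : ‖lam‖ = specRad n x) :
    lam ∈ spectrum ℂ x ↔ specRad n (x + lam • 1) = 2 * ‖lam‖ := by
  constructor
  · intro hmem
    refine (add_smul_one_le hlam).antisymm ?_
    have htwice : lam + lam ∈ spectrum ℂ (x + lam • 1) := by
      rw [spectrum_add_smul_one]
      exact ⟨lam, hmem, rfl⟩
    calc 2 * ‖lam‖ = ‖lam + lam‖ := by rw [← two_mul, norm_mul, Complex.norm_two]
      _ ≤ _ := norm_le htwice
  · intro hrad
    obtain ⟨μ, hμ, hμnorm⟩ := exists_mem_spectrum_norm_eq (x + lam • 1)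
    rw [spectrum_add_smul_one] at hμ
    obtain ⟨ν, hν, rfl⟩ := hμ
    have hνlam : ν = lam :=
      eq_of_norm_le_of_norm_add_eq_two_mul (hlam ▸ norm_le hν) (hμnorm.trans hrad)
    exact hνlam ▸ hν

lemma peripheralSpectrum_subset_of_add_smul_one_eq {x y : Matrix (Fin n) (Fin n) ℂ}
    (h : ∀ μ : ℂ, specRad n (x + μ • 1) = specRad n (y + μ • 1)) :
    peripheralSpectrum n x ⊆ peripheralSpectrum n y := by
  rintro lam ⟨hmem, hlam⟩
  rcases isEmpty_or_nonempty (Fin n) with hn | hn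
  · simp [spectrum.of_subsingleton] at hmem
  have hlam' : ‖lam‖ = specRad n y := hlam.trans (by simpa using h 0)
  refine ⟨(mem_spectrum_iff_add_smul_one_eq hlam').mpr ?_, hlam'⟩
  rw [← h lam]
  exact (mem_spectrum_iff_add_smul_one_eq hlam).mp hmem

lemma peripheralSpectrum_eq_of_add_smul_one_eq {x y : Matrix (Fin n) (Fin n) ℂ}
    (h : ∀ μ : ℂ, specRad n (x + μ • 1) = specRad n (y + μ • 1)) :
    peripheralSpectrum n x = peripheralSpectrum n y :=
  (peripheralSpectrum_subset_of_add_smul_one_eq h).antisymm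
    (peripheralSpectrum_subset_of_add_smul_one_eq fun μ => (h μ).symm)

end specRad

theorem stmt_10_general (n : ℕ) (T : Matrix (Fin n) (Fin n) ℂ → Matrix (Fin n) (Fin n) ℂ)
    (hT : IsLinearMap ℝ T)
    (hρ : ∀ x, specRad n (T x) = specRad n x)
    (hscal : ∀ lam : ℂ, T (lam • (1 : Matrix (Fin n) (Fin n) ℂ)) = lam • 1) :
    ∀ x : Matrix (Fin n) (Fin n) ℂ,
      {lam ∈ spectrum ℂ x | ‖lam‖ = specRad n x} =
        {lam ∈ spectrum ℂ (T x) | ‖lam‖ = specRad n (T x)} := by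
  intro x
  refine specRad.peripheralSpectrum_eq_of_add_smul_one_eq fun μ => ?_
  rw [← hρ, hT.map_add, hscal]

theorem stmt_10 (n : ℕ) (T : Matrix (Fin n) (Fin n) ℂ → Matrix (Fin n) (Fin n) ℂ)
    (hT : IsLinearMap ℝ T) (hbij : Function.Bijective T)
    (hρ : ∀ x, specRad n (T x) = specRad n x)
    (hscal : ∀ lam : ℂ, T (lam • (1 : Matrix (Fin n) (Fin n) ℂ)) = lam • 1) :
    ∀ x : Matrix (Fin n) (Fin n) ℂ,
      {lam ∈ spectrum ℂ x | ‖lam‖ = specRad n x} =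
        {lam ∈ spectrum ℂ (T x) | ‖lam‖ = specRad n (T x)} :=
  stmt_10_general n T hT hρ hscal
end

section
/- Let f : M_n(ℂ) → ℂ be a Lipschitz function whose complex (Fréchet) differential exists at almost every point of M_n(ℂ) with respect to Lebesgue measure. Then for all a, b ∈ M_n(ℂ), the function z ↦ f(a + z·b) from ℂ to ℂ is affine. -/
/-!
On each complex line `z ↦ a + z • b` the function `f` restricts to a Lipschitz function
`g : ℂ → ℂ`, and by Fubini almost every line parallel to `b` meets the differentiability set of
`f` in a set of full measure. For such a `g`, averaging the translates `g (w - u)` over a disc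
of radius `ε` gives an entire function whose derivative is an average of `g'`, hence bounded by
the Lipschitz constant; by Liouville it is affine, and it is uniformly `L ε`-close to `g`.
Letting `ε → 0`, `g` is affine. Both sides of the affine identity depend continuously on the
base point of the line, so it holds on every line, not just almost every one.
-/

open scoped Matrix.Norms.L2Operator
open MeasureTheory

open Metric Filter ProbabilityTheory

section Affine

variable {E : Type*} [NormedAddCommGroup E] [NormedSpace ℂ E]

theorem exists_eq_smul_add_of_differentiable_of_norm_deriv_le [CompleteSpace E] {G : ℂ → E}
    (hG : Differentiable ℂ G) {C : ℝ} (hC : ∀ z, ‖deriv G z‖ ≤ C) :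
    ∃ c : E, ∀ z, G z = z • c + G 0 := by
  have hG'_const : ∀ z, deriv G z = deriv G 0 :=
    fun z ↦ hG.deriv.apply_eq_apply_of_bounded
      (isBounded_iff_forall_norm_le.2 ⟨C, by rintro _ ⟨w, rfl⟩; exact hC w⟩) z 0
  refine ⟨deriv G 0, fun z ↦ ?_⟩
  have hdiff : Differentiable ℂ fun w ↦ G w - w • deriv G 0 := hG.sub (by fun_prop)
  have hderiv : ∀ w, deriv (fun w ↦ G w - w • deriv G 0) w = 0 := fun w ↦ by
    rw [deriv_fun_sub (hG w) (by fun_prop), deriv_smul_const (by fun_prop), hG'_const w]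
    simp
  have := is_const_of_deriv_eq_zero hdiff hderiv z 0
  simp only [zero_smul, sub_zero] at this
  rw [← this, add_sub_cancel]

theorem eq_smul_add_of_forall_exists_norm_sub_le {g : ℂ → E}
    (h : ∀ δ > 0, ∃ c d : E, ∀ z, ‖g z - (z • c + d)‖ ≤ δ) (z : ℂ) :
    g z = z • (g 1 - g 0) + g 0 := by
  refine eq_of_forall_dist_le fun η hη ↦ ?_
  obtain ⟨c, d, hcd⟩ := h (η / (2 + 2 * ‖z‖)) (by positivity)
  set e : ℂ → E := fun w ↦ g w - (w • c + d)
  have he : ∀ w, ‖e w‖ ≤ η / (2 + 2 * ‖z‖) := hcd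
  calc dist (g z) (z • (g 1 - g 0) + g 0)
      = ‖e z - z • (e 1 - e 0) - e 0‖ := by
        rw [dist_eq_norm]; congr 1; simp only [e]; module
    _ ≤ ‖e z‖ + ‖z‖ * (‖e 1‖ + ‖e 0‖) + ‖e 0‖ := by
        grw [norm_sub_le _ (e 0), norm_sub_le (e z), norm_smul, norm_sub_le (e 1)]
    _ ≤ η / (2 + 2 * ‖z‖) + ‖z‖ * (η / (2 + 2 * ‖z‖) + η / (2 + 2 * ‖z‖)) +
          η / (2 + 2 * ‖z‖) := by grw [he z, he 1, he 0]
    _ = η := by field_simp; ring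

end Affine

section Smoothing

variable {E : Type*} [NormedAddCommGroup E] {g : ℂ → E} {L : NNReal} {ν : Measure ℂ} {ε : ℝ}

theorem LipschitzWith.integrable_comp_sub [IsFiniteMeasure ν] (hg : LipschitzWith L g)
    (hν : ∀ᵐ u ∂ν, ‖u‖ ≤ ε) (w : ℂ) : Integrable (fun u ↦ g (w - u)) ν := by
  refine Integrable.of_bound (hg.continuous.comp (by fun_prop)).aestronglyMeasurable
    (‖g w‖ + L * ε) (hν.mono fun u hu ↦ ?_)
  calc ‖g (w - u)‖ ≤ ‖g w‖ + ‖g (w - u) - g w‖ := norm_le_insert' _ _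
    _ ≤ ‖g w‖ + L * ‖w - u - w‖ := by grw [hg.norm_sub_le]
    _ ≤ ‖g w‖ + L * ε := by rw [sub_sub_cancel_left, norm_neg]; gcongr

theorem LipschitzWith.hasDerivAt_integral_comp_sub [NormedSpace ℂ E] [CompleteSpace E]
    [IsFiniteMeasure ν] (hg : LipschitzWith L g) (hd : ∀ᵐ z, DifferentiableAt ℂ g z)
    (hν : ∀ᵐ u ∂ν, ‖u‖ ≤ ε) (hνac : ν ≪ volume) (w : ℂ) :
    HasDerivAt (fun w ↦ ∫ u, g (w - u) ∂ν) (∫ u, deriv g (w - u) ∂ν) w := by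
  have hd' : ∀ᵐ u ∂ν, DifferentiableAt ℂ g (w - u) :=
    hνac.ae_le ((Measure.measurePreserving_sub_left volume w).quasiMeasurePreserving.ae hd)
  refine (hasDerivAt_integral_of_dominated_loc_of_lip (bound := fun _ ↦ (L : ℝ)) univ_mem
    (Eventually.of_forall fun _ ↦ (hg.continuous.comp (by fun_prop)).aestronglyMeasurable)
    (hg.integrable_comp_sub hν w)
    ((stronglyMeasurable_deriv g).aestronglyMeasurable.comp_measurable (by fun_prop))
    (ae_of_all _ fun u ↦ ?_) (integrable_const _)
    (hd'.mono fun u hu ↦ hu.hasDerivAt.comp_sub_const w u)).2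
  have : LipschitzWith L fun w ↦ g (w - u) :=
    LipschitzWith.of_dist_le_mul fun x y ↦ by
      simpa only [dist_sub_right] using hg.dist_le_mul (x - u) (y - u)
  simpa using this

theorem LipschitzWith.norm_integral_comp_sub_sub_le [NormedSpace ℝ E] [CompleteSpace E]
    [IsProbabilityMeasure ν] (hg : LipschitzWith L g) (hν : ∀ᵐ u ∂ν, ‖u‖ ≤ ε) (w : ℂ) :
    ‖∫ u, g (w - u) ∂ν - g w‖ ≤ L * ε := by
  have hsub : ∫ u, g (w - u) ∂ν - g w = ∫ u, (g (w - u) - g w) ∂ν := by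
    rw [integral_sub (hg.integrable_comp_sub hν w) (integrable_const _), integral_const,
      probReal_univ, one_smul]
  rw [hsub]
  refine (norm_integral_le_of_norm_le_const (C := L * ε) (hν.mono fun u hu ↦ ?_)).trans_eq
    (by rw [probReal_univ, mul_one])
  calc ‖g (w - u) - g w‖ ≤ L * ‖w - u - w‖ := hg.norm_sub_le _ _
    _ ≤ L * ε := by rw [sub_sub_cancel_left, norm_neg]; gcongr

theorem LipschitzWith.eq_smul_add_of_ae_differentiableAt [NormedSpace ℂ E] [CompleteSpace E]
    (hg : LipschitzWith L g) (hd : ∀ᵐ z, DifferentiableAt ℂ g z) (z : ℂ) :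
    g z = z • (g 1 - g 0) + g 0 := by
  refine eq_smul_add_of_forall_exists_norm_sub_le (fun δ hδ ↦ ?_) z
  set ε := δ / (L + 1)
  have hε : 0 < ε := by positivity
  set ν : Measure ℂ := volume[|closedBall 0 ε]
  have : IsProbabilityMeasure ν := cond_isProbabilityMeasure_of_finite
    (measure_closedBall_pos volume 0 hε).ne' measure_closedBall_lt_top.ne
  have hν : ∀ᵐ u ∂ν, ‖u‖ ≤ ε :=
    (ae_cond_mem measurableSet_closedBall).mono fun u hu ↦ mem_closedBall_zero_iff.1 hu
  set G : ℂ → E := fun w ↦ ∫ u, g (w - u) ∂ν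
  have hG (w : ℂ) := hg.hasDerivAt_integral_comp_sub hd hν cond_absolutelyContinuous w
  obtain ⟨c, hc⟩ := exists_eq_smul_add_of_differentiable_of_norm_deriv_le
    (fun w ↦ (hG w).differentiableAt) (C := L) fun w ↦ by
      rw [(hG w).deriv]
      exact (norm_integral_le_of_norm_le_const
        (ae_of_all _ fun _ ↦ norm_deriv_le_of_lipschitz hg)).trans_eq (by rw [probReal_univ, mul_one])
  refine ⟨c, G 0, fun w ↦ ?_⟩
  rw [← hc w, norm_sub_rev]
  calc ‖G w - g w‖ ≤ L * ε := hg.norm_integral_comp_sub_sub_le hν w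
    _ ≤ δ := by
      rw [mul_div_assoc']
      exact div_le_of_le_mul₀ (by positivity) hδ.le (by nlinarith)

end Smoothing

theorem ae_ae_add_mem_of_ae_mem {G T : Type*} [AddGroup G] [MeasurableSpace G] [MeasurableAdd₂ G]
    [MeasurableSpace T] {μ : Measure G} [SFinite μ] [μ.IsAddRightInvariant] {ν : Measure T}
    [SFinite ν] {v : T → G} (hv : Measurable v) {s : Set G} (hs : MeasurableSet s)
    (h : ∀ᵐ x ∂μ, x ∈ s) : ∀ᵐ x ∂μ, ∀ᵐ t ∂ν, x + v t ∈ s := by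
  refine Measure.ae_ae_of_ae_prod (p := fun q ↦ q.1 + v q.2 ∈ s) ?_
  have hmeas : MeasurableSet {q : G × T | q.1 + v q.2 ∉ s} :=
    (by fun_prop : Measurable fun q : G × T ↦ q.1 + v q.2) hs.compl
  have hnull (t : T) : μ {x | x + v t ∉ s} = 0 :=
    (measure_preimage_add_right μ (v t) sᶜ).trans (ae_iff.1 h)
  rw [ae_iff, Measure.prod_apply_symm hmeas]
  simp [hnull]

theorem stmt_14 (n : ℕ) (f : Matrix (Fin n) (Fin n) ℂ → ℂ)
    (L : NNReal) (hLip : LipschitzWith L f)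
    [MeasurableSpace (Matrix (Fin n) (Fin n) ℂ)]
    [BorelSpace (Matrix (Fin n) (Fin n) ℂ)]
    (μ : Measure (Matrix (Fin n) (Fin n) ℂ)) [μ.IsAddHaarMeasure]
    (hdiff : ∀ᵐ x ∂μ, DifferentiableAt ℂ f x) :
    ∀ a b : Matrix (Fin n) (Fin n) ℂ, ∃ α β : ℂ, ∀ z : ℂ, f (a + z • b) = α * z + β := by
  intro a b
  have : SigmaCompactSpace (Matrix (Fin n) (Fin n) ℂ) :=
    inferInstanceAs (SigmaCompactSpace (Fin n → Fin n → ℂ))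
  have hf := hLip.continuous
  have hslice (a' : Matrix (Fin n) (Fin n) ℂ) :
      LipschitzWith (L * ‖b‖₊) fun z : ℂ ↦ f (a' + z • b) :=
    LipschitzWith.of_dist_le_mul fun z w ↦ (hLip.dist_le_mul _ _).trans_eq <| by
      rw [dist_eq_norm, dist_eq_norm, add_sub_add_left_eq_sub, ← sub_smul, norm_smul]
      push_cast; ring
  have hae : ∀ᵐ a' ∂μ, ∀ z : ℂ, f (a' + z • b) = (f (a' + b) - f a') * z + f a' := by
    filter_upwards [ae_ae_add_mem_of_ae_mem (ν := volume) (v := fun z : ℂ ↦ z • b) (by fun_prop)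
      (measurableSet_of_differentiableAt ℂ f) hdiff] with a' ha' z
    have hline := (hslice a').eq_smul_add_of_ae_differentiableAt
      (ha'.mono fun z hz ↦ hz.comp z (by fun_prop)) z
    simpa [mul_comm] using hline
  refine ⟨f (a + b) - f a, f a, fun z ↦ ?_⟩
  have hz := (Continuous.ae_eq_iff_eq μ (by fun_prop) (by fun_prop)).1 (hae.mono fun a' h ↦ h z)
  exact congrFun hz a
end

section
/- Let δ > 0 and let G be holomorphic on the open ball of radius δ in M_n(ℂ) with G(0) = 0 and derivative at 0 equal to the identity, and suppose Tr(G(x)·G(y)) = Tr(x·y) for all x, y with ‖x‖, ‖y‖ < δ/4. Then G(x) = x for all ‖x‖ < δ/4. -/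
/-!
Differentiating `Tr (G x * G y) = Tr (x * y)` in `y` at `0`, where `G` has derivative the
identity, gives `Tr (G x * h) = Tr (x * h)` for every `h`; nondegeneracy of the trace pairing
then forces `G x = x`.
-/

open scoped Matrix.Norms.L2Operator

open Filter Topology

theorem ContinuousLinearMap.comp_eq_of_comp_eventuallyEq {𝕜 E F H : Type*}
    [NontriviallyNormedField 𝕜] [NormedAddCommGroup E] [NormedSpace 𝕜 E]
    [NormedAddCommGroup F] [NormedSpace 𝕜 F] [NormedAddCommGroup H] [NormedSpace 𝕜 H]
    {G : E → F} {G' : E →L[𝕜] F} {a : E} (hG : HasFDerivAt G G' a)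
    {φ : F →L[𝕜] H} {ψ : E →L[𝕜] H} (h : (fun x => φ (G x)) =ᶠ[𝓝 a] ψ) :
    φ.comp G' = ψ :=
  ((φ.hasFDerivAt.comp a hG).congr_of_eventuallyEq h.symm).unique ψ.hasFDerivAt

namespace Matrix

variable {𝕜 n : Type*} [RCLike 𝕜] [Fintype n] [DecidableEq n]

noncomputable def traceMulLeftCLM (A : Matrix n n 𝕜) : Matrix n n 𝕜 →L[𝕜] 𝕜 :=
  LinearMap.toContinuousLinearMap (traceLinearMap n 𝕜 𝕜 ∘ₗ LinearMap.mulLeft 𝕜 A)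

@[simp]
theorem traceMulLeftCLM_apply (A X : Matrix n n 𝕜) : traceMulLeftCLM A X = (A * X).trace :=
  rfl

end Matrix

theorem stmt_16_general (n : ℕ) (δ : ℝ) (hδ : 0 < δ)
    (G : Matrix (Fin n) (Fin n) ℂ → Matrix (Fin n) (Fin n) ℂ)
    (hG : DifferentiableOn ℂ G (Metric.ball 0 δ))
    (hD : fderiv ℂ G 0 = ContinuousLinearMap.id ℂ (Matrix (Fin n) (Fin n) ℂ))
    (htr : ∀ x y : Matrix (Fin n) (Fin n) ℂ, ‖x‖ < δ/4 → ‖y‖ < δ/4 →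
      (G x * G y).trace = (x * y).trace) :
    ∀ x : Matrix (Fin n) (Fin n) ℂ, ‖x‖ < δ/4 → G x = x := by
  intro x hx
  have hG0 : HasFDerivAt G (ContinuousLinearMap.id ℂ _) 0 :=
    hD ▸ (hG.differentiableAt (Metric.ball_mem_nhds 0 hδ)).hasFDerivAt
  have hpair : (Matrix.traceMulLeftCLM (G x)).comp (ContinuousLinearMap.id ℂ _) =
      Matrix.traceMulLeftCLM x := by
    refine ContinuousLinearMap.comp_eq_of_comp_eventuallyEq hG0 ?_
    filter_upwards [Metric.ball_mem_nhds 0 (by positivity : 0 < δ / 4)] with y hy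
    simpa using htr x y hx (mem_ball_zero_iff.mp hy)
  rw [Matrix.ext_iff_trace_mul_right]
  intro X
  simpa using DFunLike.congr_fun hpair X

theorem stmt_16 (n : ℕ) (δ : ℝ) (hδ : 0 < δ)
    (G : Matrix (Fin n) (Fin n) ℂ → Matrix (Fin n) (Fin n) ℂ)
    (hG : DifferentiableOn ℂ G (Metric.ball 0 δ))
    (h0 : G 0 = 0)
    (hD : fderiv ℂ G 0 = ContinuousLinearMap.id ℂ (Matrix (Fin n) (Fin n) ℂ))
    (htr : ∀ x y : Matrix (Fin n) (Fin n) ℂ, ‖x‖ < δ/4 → ‖y‖ < δ/4 →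
      (G x * G y).trace = (x * y).trace) :
    ∀ x : Matrix (Fin n) (Fin n) ℂ, ‖x‖ < δ/4 → G x = x :=
  stmt_16_general n δ hδ G hG hD htr
end
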